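/- Subdividing an edge of a graph does not change its tree cover number, and deleting a leaf of a graph does not change its tree cover number. -/

import Mathlib

open SimpleGraph

/-- A tree cover of `G`: vertex-disjoint induced subtrees covering all vertices. -/
def IsTreeCover {V : Type} (G : SimpleGraph V) (C : Finset (Set V)) : Prop :=
  (∀ s ∈ C, (G.induce s).IsTree) ∧ (∀ v : V, ∃ s ∈ C, v ∈ s) ∧
    (C : Set (Set V)).PairwiseDisjoint id

/-- The tree cover number: minimum cardinality of a tree cover. -/
noncomputable def treeCoverNumber {V : Type} (G : SimpleGraph V) : ℕ :=
  sInf {n | ∃ C : Finset (Set V), IsTreeCover G C ∧ C.card = n}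

/-- Subdivide the edge `{u, w}` of `G`: `none` is the new vertex, adjacent to exactly `u`
and `w`; the edge `{u, w}` itself is removed. -/
def subdivide {V : Type} (G : SimpleGraph V) (u w : V) : SimpleGraph (Option V) where
  Adj a b :=
    match a, b with
    | some x, some y => (G.deleteEdges {s(u, w)}).Adj x y
    | some x, none => x = u ∨ x = w
    | none, some y => y = u ∨ y = w
    | none, none => False
  symm := by
    constructor
    rintro (_ | x) (_ | y) h
    · exact h
    · exact h
    · exact h
    · exact h.symm
  loopless := by
    constructor
    rintro (_ | x) h
    · exact h
    · exact (G.deleteEdges {s(u, w)}).loopless.irrefl x h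

/-!
Both invariances are proved by pulling tree covers back along vertex maps: the preimages of the
parts of a tree cover partition the new vertex set, so it suffices that the map pulls induced trees
back to induced trees. For the leaf `v` with neighbour `x` the maps are the inclusion of `V ∖ {v}`
and the retraction sending `v` to `x`; they work because attaching or removing a pendant vertex
preserves trees. For the subdivision the maps are `Option.getD · u`, collapsing the new vertex onto
`u`, and `some`. The latter fails only when a part contains `u` and `w` but not the new vertex;
the new vertex is then a part on its own, and the cover is repaired without growing by splitting
the offending part along an edge of its `u`–`w` path and attaching the new vertex to the half
containing `u`. Subdividing an edge preserves trees by counting: one more vertex, one more edge,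
and connectivity is unchanged.
-/

namespace SimpleGraph

section Trees

variable {V W : Type*} {G : SimpleGraph V} {H : SimpleGraph W}

noncomputable def Embedding.induceImageIso (f : H ↪g G) (s : Set W) :
    H.induce s ≃g G.induce (f '' s) where
  toEquiv := Equiv.Set.image f s f.injective
  map_rel_iff' := by simp

lemma isTree_induce_induce_iff (s : Set V) (t : Set s) :
    ((G.induce s).induce t).IsTree ↔ (G.induce (Subtype.val '' t)).IsTree :=
  ((Embedding.induce s).induceImageIso t).isTree_iff

lemma Connected.exists_adj_of_induce {s : Set V} (h : (G.induce s).Connected) {v y : V}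
    (hv : v ∈ s) (hy : y ∈ s) (hne : v ≠ y) : ∃ z ∈ s, G.Adj v z := by
  obtain ⟨p⟩ := h.preconnected ⟨v, hv⟩ ⟨y, hy⟩
  exact ⟨_, p.snd.2, p.adj_snd (p.not_nil_of_ne (by simpa [Subtype.ext_iff]))⟩

lemma Preconnected.of_adj_reachable (hG : G.Preconnected) (f : V → W)
    (hf : ∀ b, ∃ a, H.Reachable (f a) b) (hadj : ∀ a a', G.Adj a a' → H.Reachable (f a) (f a')) :
    H.Preconnected := by
  have hmap : ∀ a a', H.Reachable (f a) (f a') := fun a a' => by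
    obtain ⟨p⟩ := hG a a'
    induction p with
    | nil => rfl
    | cons h _ ih => exact (hadj _ _ h).trans ih
  intro b b'
  obtain ⟨a, ha⟩ := hf b
  obtain ⟨a', ha'⟩ := hf b'
  exact ha.symm.trans ((hmap a a').trans ha')

lemma isTree_iff_isTree_induce_compl_singleton {v x : V} (hv : ∀ y, G.Adj v y ↔ y = x) :
    G.IsTree ↔ (G.induce {v}ᶜ).IsTree := by
  have hvx : G.Adj v x := (hv x).2 rfl
  refine ⟨fun hG => ?_, fun hT => ?_⟩
  · have : Fintype (G.neighborSet v) := by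
      rw [show G.neighborSet v = {x} from Set.ext hv]
      infer_instance
    exact ⟨hG.connected.induce_compl_singleton_of_degree_eq_one
      (degree_eq_one_iff_existsUnique_adj.2 ⟨x, hvx, fun y => (hv y).1⟩), hG.isAcyclic.induce _⟩
  have hreach : ∀ y, G.Reachable y x := fun y => by
    by_cases hy : y = v
    · exact hy ▸ hvx.reachable
    · exact (hT.connected.preconnected ⟨y, hy⟩ ⟨x, hvx.ne'⟩).map (Embedding.induce _).toHom
  have : Nonempty V := ⟨v⟩
  refine ⟨⟨fun y z => (hreach y).trans (hreach z).symm⟩, fun z c hc => ?_⟩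
  by_cases hvc : v ∈ c.support
  · -- a cycle through `v` would give `v` two distinct neighbours
    classical
    have hc' := hc.rotate hvc
    exact hc'.snd_ne_penultimate <| ((hv _).1 ((c.rotate v hvc).adj_snd hc'.not_nil)).trans
      ((hv _).1 ((c.rotate v hvc).adj_penultimate hc'.not_nil).symm).symm
  · refine hT.isAcyclic (c.induce _ fun y hy => Set.mem_compl_singleton_iff.2
      (ne_of_mem_of_not_mem hy hvc)) ?_
    rw [← Walk.isCycle_map_iff_of_injective (f := (Embedding.induce ({v}ᶜ : Set V)).toHom)
      Subtype.val_injective, Walk.map_induce]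
    exact hc

lemma isTree_induce_iff_isTree_induce_sdiff_singleton {s : Set V} {v x : V} (hv : v ∈ s)
    (hx : x ∈ s) (hvs : ∀ y ∈ s, G.Adj v y ↔ y = x) :
    (G.induce s).IsTree ↔ (G.induce (s \ {v})).IsTree := by
  rw [isTree_iff_isTree_induce_compl_singleton (v := (⟨v, hv⟩ : s)) (x := ⟨x, hx⟩)
    fun y => by simpa [Subtype.ext_iff] using hvs y y.2, isTree_induce_induce_iff,
    show Subtype.val '' ({⟨v, hv⟩}ᶜ : Set s) = s \ {v} by ext; simp]

lemma IsTree.exists_isTree_induce_compl (hG : G.IsTree) {a b : V} (hab : a ≠ b) :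
    ∃ A : Set V, a ∈ A ∧ b ∉ A ∧ (G.induce A).IsTree ∧ (G.induce Aᶜ).IsTree := by
  obtain ⟨p, hp⟩ := hG.connected.preconnected.exists_isPath a b
  cases p with
  | nil => exact absurd rfl hab
  | cons hac q =>
    rename_i c
    -- cut the first edge `ac` of the path from `a` to `b`
    set K := G.deleteEdges {s(a, c)}
    have hac' : ¬K.Reachable a c := isAcyclic_iff_forall_adj_isBridge.1 hG.isAcyclic hac
    have haq : a ∉ q.support := ((Walk.cons_isPath_iff _ _).1 hp).2
    have hcb : K.Reachable c b := ⟨q.toDeleteEdges _ fun e he (hea : e = s(a, c)) =>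
      haq (q.fst_mem_support_of_mem_edges (hea ▸ he))⟩
    have hcover : ∀ z, K.Reachable a z ∨ K.Reachable c z := fun z => by
      induction (reachable_iff_reflTransGen a z).1 (hG.connected.preconnected a z) with
      | refl => exact .inl .rfl
      | @tail x y _ hxy ih =>
        by_cases he : s(x, y) = s(a, c)
        · rcases Sym2.eq_iff.1 he with ⟨-, rfl⟩ | ⟨-, rfl⟩
          exacts [.inr .rfl, .inl .rfl]
        · have hK : K.Adj x y := (deleteEdges_adj).2 ⟨hxy, he⟩
          exact ih.imp (·.trans hK.reachable) (·.trans hK.reachable)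
    have hconn : ∀ C : K.ConnectedComponent, (G.induce C.supp).Connected := fun C =>
      C.maximal_connected_induce_supp.prop.mono fun _ _ h => (deleteEdges_le (G := G) _) h
    have hcompl : (K.connectedComponentMk a).suppᶜ = (K.connectedComponentMk c).supp := by
      ext z
      simp only [Set.mem_compl_iff, ConnectedComponent.mem_supp_iff, ConnectedComponent.eq]
      exact ⟨fun h => ((hcover z).resolve_left fun h' => h h'.symm).symm,
        fun hzc hza => hac' (hza.symm.trans hzc)⟩
    refine ⟨(K.connectedComponentMk a).supp, ConnectedComponent.connectedComponentMk_mem,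
      fun hb => hac' ((ConnectedComponent.eq.1 hb).symm.trans hcb.symm),
      ⟨hconn _, hG.isAcyclic.induce _⟩, ?_⟩
    rw [hcompl]
    exact ⟨hconn _, hG.isAcyclic.induce _⟩

lemma exists_isTree_induce_sdiff {s : Set V} (hs : (G.induce s).IsTree) {a b : V} (ha : a ∈ s)
    (hb : b ∈ s) (hab : a ≠ b) :
    ∃ A ⊆ s, a ∈ A ∧ b ∉ A ∧ (G.induce A).IsTree ∧ (G.induce (s \ A)).IsTree := by
  obtain ⟨A, haA, hbA, hA, hAc⟩ :=
    hs.exists_isTree_induce_compl (a := ⟨a, ha⟩) (b := ⟨b, hb⟩) (by simpa)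
  rw [isTree_induce_induce_iff] at hA hAc
  refine ⟨Subtype.val '' A, by simp, ⟨_, haA, rfl⟩, ?_, hA, ?_⟩
  · rintro ⟨⟨b', _⟩, hbA', rfl⟩
    exact hbA hbA'
  · rwa [Set.image_compl_eq_range_sdiff_image Subtype.val_injective, Subtype.range_coe] at hAc

end Trees

section Subdivide

variable {V : Type} {G : SimpleGraph V} {u w : V}

lemma subdivide_adj_none {o : Option V} :
    (subdivide G u w).Adj none o ↔ o = some u ∨ o = some w := by
  cases o <;> simp [subdivide]

lemma connected_subdivide_iff (huw : G.Adj u w) :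
    (subdivide G u w).Connected ↔ G.Connected := by
  have hu : (subdivide G u w).Adj (some u) none := Or.inl rfl
  have hw : (subdivide G u w).Adj (some w) none := Or.inr rfl
  have : Nonempty V := ⟨u⟩
  refine ⟨fun h => ⟨h.preconnected.of_adj_reachable (·.getD u) (fun x => ⟨some x, .rfl⟩) ?_⟩,
    fun h => ⟨h.preconnected.of_adj_reachable some ?_ ?_⟩⟩
  · rintro (_ | x) (_ | y) h
    · exact h.elim
    · rcases h with rfl | rfl
      exacts [.rfl, huw.reachable]
    · rcases h with rfl | rfl
      exacts [.rfl, huw.symm.reachable]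
    · exact h.1.reachable
  · rintro (_ | x)
    exacts [⟨u, hu.reachable⟩, ⟨x, .rfl⟩]
  · intro x y hxy
    by_cases he : s(x, y) = s(u, w)
    · rcases Sym2.eq_iff.1 he with ⟨rfl, rfl⟩ | ⟨rfl, rfl⟩
      exacts [hu.reachable.trans hw.reachable.symm, hw.reachable.trans hu.reachable.symm]
    · exact Adj.reachable (G := subdivide G u w) (u := some x) (v := some y)
        ((deleteEdges_adj).2 ⟨hxy, he⟩)

lemma card_edgeSet_subdivide [Finite V] (huw : G.Adj u w) :
    Nat.card (subdivide G u w).edgeSet = Nat.card G.edgeSet + 1 := by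
  classical
  have := Fintype.ofFinite V
  set G' := subdivide G u w
  have hdeg : G'.degree none = 2 := by
    rw [← card_neighborFinset_eq_degree]
    convert Finset.card_pair (a := some u) (b := some w) (by simpa using huw.ne)
    ext o
    simp [G', subdivide_adj_none]
  have hdel : G'.deleteIncidenceSet none =
      (G.deleteEdges {s(u, w)}).map Function.Embedding.some := by
    ext a b
    rw [map_adj]
    cases a <;> cases b <;> simp [G', deleteIncidenceSet_adj, subdivide]
  have h1 : Nat.card (G'.deleteIncidenceSet none).edgeSet = Nat.card G'.edgeSet - 2 := by
    simp only [Nat.card_eq_fintype_card, ← edgeFinset_card]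
    rw [← hdeg]
    convert G'.card_edgeFinset_deleteIncidenceSet none
  have h2 : Nat.card ((G.deleteEdges {s(u, w)}).map Function.Embedding.some).edgeSet =
      Nat.card G.edgeSet - 1 := by
    rw [Nat.card_coe_set_eq, Nat.card_coe_set_eq, edgeSet_map,
      Set.ncard_image_of_injective _ Function.Embedding.some.sym2Map.injective,
      edgeSet_deleteEdges, Set.ncard_sdiff_singleton_of_mem (G.mem_edgeSet.2 huw)]
  have h3 : 2 ≤ Nat.card G'.edgeSet := by
    simp only [Nat.card_eq_fintype_card, ← edgeFinset_card]
    exact hdeg ▸ G'.degree_le_card_edgeFinset none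
  have h4 : 0 < Nat.card G.edgeSet := Nat.card_pos_iff.2 ⟨⟨⟨s(u, w), huw⟩⟩, inferInstance⟩
  rw [hdel] at h1
  omega

lemma isTree_subdivide_iff [Finite V] (huw : G.Adj u w) :
    (subdivide G u w).IsTree ↔ G.IsTree := by
  rw [isTree_iff_connected_and_card, isTree_iff_connected_and_card, connected_subdivide_iff huw,
    card_edgeSet_subdivide huw, Finite.card_option]
  simp

lemma induce_deleteEdges_of_not_both_mem {s : Set V} (h : ¬(u ∈ s ∧ w ∈ s)) :
    (G.deleteEdges {s(u, w)}).induce s = G.induce s := by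
  ext x y
  simp only [comap_adj, Function.Embedding.coe_subtype, deleteEdges_adj, Set.mem_singleton_iff,
    and_iff_left_iff_imp]
  intro _ he
  rcases Sym2.eq_iff.1 he with ⟨hx, hy⟩ | ⟨hx, hy⟩
  exacts [h ⟨hx ▸ x.2, hy ▸ y.2⟩, h ⟨hy ▸ y.2, hx ▸ x.2⟩]

variable (G u w) in
def subdivideEmbedding : G.deleteEdges {s(u, w)} ↪g subdivide G u w where
  toFun := some
  inj' := Option.some_injective V
  map_rel_iff' := Iff.rfl

def subdivideInduceIso {t : Set (Option V)} (hn : none ∈ t) (hu : some u ∈ t) (hw : some w ∈ t) :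
    (subdivide G u w).induce t ≃g subdivide (G.induce (some ⁻¹' t)) ⟨u, hu⟩ ⟨w, hw⟩ where
  toFun
    | ⟨none, _⟩ => none
    | ⟨some x, hx⟩ => some ⟨x, hx⟩
  invFun
    | none => ⟨none, hn⟩
    | some x => ⟨some x, x.2⟩
  left_inv := by rintro ⟨_ | x, hx⟩ <;> rfl
  right_inv := by rintro (_ | x) <;> rfl
  map_rel_iff' := by
    rintro ⟨_ | x, hx⟩ ⟨_ | y, hy⟩ <;> simp [subdivide, Subtype.ext_iff]

lemma isTree_induce_subdivide_iff_of_none_notMem {t : Set (Option V)} (hn : none ∉ t)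
    (h : ¬(some u ∈ t ∧ some w ∈ t)) :
    ((subdivide G u w).induce t).IsTree ↔ (G.induce (some ⁻¹' t)).IsTree := by
  rw [← induce_deleteEdges_of_not_both_mem (s := some ⁻¹' t) h,
    ((subdivideEmbedding G u w).induceImageIso _).isTree_iff,
    show ⇑(subdivideEmbedding G u w) = some from rfl, Set.image_preimage_eq_of_subset]
  rintro (_ | x) hx
  exacts [absurd hx hn, ⟨x, rfl⟩]

lemma isTree_induce_subdivide_iff [Finite V] (huw : G.Adj u w) {t : Set (Option V)}
    (hboth : some u ∈ t → some w ∈ t → none ∈ t) (hnone : none ∈ t → some u ∈ t ∨ some w ∈ t) :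
    ((subdivide G u w).induce t).IsTree ↔ (G.induce (some ⁻¹' t)).IsTree := by
  by_cases hn : none ∈ t
  swap
  · exact isTree_induce_subdivide_iff_of_none_notMem hn fun h => hn (hboth h.1 h.2)
  have hdiff : some ⁻¹' (t \ {none}) = some ⁻¹' t := by ext; simp
  by_cases hu : some u ∈ t <;> by_cases hw : some w ∈ t
  · exact (subdivideInduceIso hn hu hw).isTree_iff.trans
      (isTree_subdivide_iff (G := G.induce (some ⁻¹' t)) huw)
  · rw [isTree_induce_iff_isTree_induce_sdiff_singleton hn hu fun y hy => ?_,
      isTree_induce_subdivide_iff_of_none_notMem (by simp) (by simp [hw]), hdiff]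
    rw [subdivide_adj_none]
    exact ⟨fun h => h.resolve_right fun h' => hw (h' ▸ hy), .inl⟩
  · rw [isTree_induce_iff_isTree_induce_sdiff_singleton hn hw fun y hy => ?_,
      isTree_induce_subdivide_iff_of_none_notMem (by simp) (by simp [hu]), hdiff]
    rw [subdivide_adj_none]
    exact ⟨fun h => h.resolve_left fun h' => hu (h' ▸ hy), .inr⟩
  · exact absurd (hnone hn) (by tauto)

end Subdivide

end SimpleGraph

section TreeCover

variable {V W : Type} {G : SimpleGraph V} {H : SimpleGraph W} {C : Finset (Set V)}

lemma treeCoverNumber_le_card (hC : IsTreeCover G C) : treeCoverNumber G ≤ C.card :=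
  Nat.sInf_le ⟨C, hC, rfl⟩

lemma exists_isTreeCover_card_eq [Finite V] (G : SimpleGraph V) :
    ∃ C, IsTreeCover G C ∧ C.card = treeCoverNumber G := by
  classical
  have := Fintype.ofFinite V
  refine Nat.sInf_mem (s := {n | ∃ C, IsTreeCover G C ∧ C.card = n})
    ⟨_, Finset.univ.image fun v => {v}, ⟨?_, fun v => ⟨{v}, by simp, rfl⟩, ?_⟩, rfl⟩
  · simp only [Finset.mem_image, Finset.mem_univ, true_and, forall_exists_index,
      forall_apply_eq_imp_iff]
    exact fun _ => .of_subsingleton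
  · simp only [Finset.coe_image, Finset.coe_univ, Set.image_univ]
    rintro _ ⟨v, rfl⟩ _ ⟨v', rfl⟩ hne
    exact Set.disjoint_singleton.2 fun h => hne (h ▸ rfl)

lemma IsTreeCover.preimage (hC : IsTreeCover G C) (g : W → V)
    (htree : ∀ s ∈ C, (g ⁻¹' s).Nonempty → (H.induce (g ⁻¹' s)).IsTree) :
    IsTreeCover H ((C.image (g ⁻¹' ·)).erase ∅) := by
  obtain ⟨-, hcov, hdisj⟩ := hC
  refine ⟨?_, fun y => ?_, ?_⟩
  · simp only [Finset.mem_erase, Finset.mem_image]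
    rintro _ ⟨hne, s, hs, rfl⟩
    exact htree s hs (Set.nonempty_iff_ne_empty.2 hne)
  · obtain ⟨s, hs, hy⟩ := hcov (g y)
    exact ⟨g ⁻¹' s, Finset.mem_erase.2 ⟨Set.nonempty_iff_ne_empty.1 ⟨y, hy⟩,
      Finset.mem_image_of_mem _ hs⟩, hy⟩
  · simp only [Finset.coe_erase, Finset.coe_image]
    rintro _ ⟨⟨s, hs, rfl⟩, -⟩ _ ⟨⟨s', hs', rfl⟩, -⟩ hne
    exact (hdisj hs hs' fun h => hne (h ▸ rfl)).preimage g

lemma IsTreeCover.treeCoverNumber_le_of_preimage (hC : IsTreeCover G C) (g : W → V)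
    (htree : ∀ s ∈ C, (g ⁻¹' s).Nonempty → (H.induce (g ⁻¹' s)).IsTree) :
    treeCoverNumber H ≤ C.card :=
  (treeCoverNumber_le_card (hC.preimage g htree)).trans
    (Finset.card_erase_le.trans Finset.card_image_le)

lemma treeCoverNumber_le_of_isTree_preimage [Finite V] (g : W → V)
    (htree : ∀ s, (G.induce s).IsTree → (g ⁻¹' s).Nonempty → (H.induce (g ⁻¹' s)).IsTree) :
    treeCoverNumber H ≤ treeCoverNumber G := by
  obtain ⟨C, hC, hcard⟩ := exists_isTreeCover_card_eq G
  exact hcard ▸ hC.treeCoverNumber_le_of_preimage g fun s hs => htree s (hC.1 s hs)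

lemma IsTreeCover.exists_exchange (hC : IsTreeCover G C) {s t A B : Set V}
    (hs : s ∈ C) (ht : t ∈ C) (hst : s ≠ t) (hA : (G.induce A).IsTree)
    (hB : (G.induce B).IsTree) (hAB : Disjoint A B) (hunion : A ∪ B = s ∪ t) :
    ∃ C', IsTreeCover G C' ∧ C'.card ≤ C.card ∧
      ∀ r ∈ C', r = A ∨ r = B ∨ (r ∈ C ∧ r ≠ s ∧ r ≠ t) := by
  classical
  obtain ⟨htrees, hcov, hdisj⟩ := hC
  set D := (C.erase s).erase t
  have hD : ∀ r ∈ D, r ∈ C ∧ r ≠ s ∧ r ≠ t := fun r hr => by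
    simp only [D, Finset.mem_erase] at hr
    exact ⟨hr.2.2, hr.2.1, hr.1⟩
  have hsub : ∀ X ⊆ s ∪ t, ∀ r ∈ D, Disjoint X r := fun X hX r hr =>
    (Disjoint.union_left (hdisj hs (hD r hr).1 (hD r hr).2.1.symm)
      (hdisj ht (hD r hr).1 (hD r hr).2.2.symm)).mono_left hX
  refine ⟨insert A (insert B D), ⟨?_, fun v => ?_, ?_⟩, ?_, ?_⟩
  · simp only [Finset.mem_insert]
    rintro r (rfl | rfl | hr)
    exacts [hA, hB, htrees r (hD r hr).1]
  · obtain ⟨r, hr, hvr⟩ := hcov v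
    by_cases hrst : r = s ∨ r = t
    · have hv : v ∈ A ∪ B := hunion ▸ hrst.elim (fun h => .inl (h ▸ hvr)) fun h => .inr (h ▸ hvr)
      exact hv.elim (fun h => ⟨A, by simp, h⟩) fun h => ⟨B, by simp, h⟩
    · simp only [not_or] at hrst
      exact ⟨r, by simp [D, hr, hrst.1, hrst.2], hvr⟩
  · rw [Finset.coe_insert, Finset.coe_insert]
    refine ((hdisj.subset fun r hr => (hD r hr).1).insert fun r hr _ => ?_).insert ?_
    · exact hsub B (hunion ▸ Set.subset_union_right) r hr
    · simp only [Set.mem_insert_iff, Finset.mem_coe]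
      rintro r (rfl | hr) -
      exacts [hAB, hsub A (hunion ▸ Set.subset_union_left) r hr]
  · have h1 : D.card + 1 = (C.erase s).card :=
      Finset.card_erase_add_one (Finset.mem_erase.2 ⟨hst.symm, ht⟩)
    have h2 := Finset.card_erase_add_one hs
    have h3 := Finset.card_insert_le A (insert B D)
    have h4 := Finset.card_insert_le B D
    omega
  · simp only [Finset.mem_insert]
    rintro r (rfl | rfl | hr)
    exacts [.inl rfl, .inr (.inl rfl), .inr (.inr (hD r hr))]

end TreeCover

section Subdivide

variable {V : Type} {G : SimpleGraph V} {u w : V}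

lemma treeCoverNumber_subdivide_le [Finite V] (huw : G.Adj u w) :
    treeCoverNumber (subdivide G u w) ≤ treeCoverNumber G :=
  treeCoverNumber_le_of_isTree_preimage (·.getD u) fun _ hs _ =>
    (isTree_induce_subdivide_iff huw (fun hu _ => hu) .inl).2 hs

lemma IsTreeCover.exists_subdivide_none_mem_of_mem_of_mem {C : Finset (Set (Option V))}
    (hC : IsTreeCover (subdivide G u w) C) (huw : G.Adj u w) :
    ∃ C', IsTreeCover (subdivide G u w) C' ∧ C'.card ≤ C.card ∧
      ∀ t ∈ C', some u ∈ t → some w ∈ t → none ∈ t := by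
  by_cases hgood : ∀ t ∈ C, some u ∈ t → some w ∈ t → none ∈ t
  · exact ⟨C, hC, le_rfl, hgood⟩
  simp only [not_forall] at hgood
  obtain ⟨s, hs, hus, hws, hns⟩ := hgood
  obtain ⟨t₀, ht₀, hnt₀⟩ := hC.2.1 none
  have hst₀ : s ≠ t₀ := fun h => hns (h ▸ hnt₀)
  -- the new vertex is alone in its part: its neighbours lie in `s`
  have ht₀_eq : t₀ = {none} := by
    refine Set.eq_singleton_iff_unique_mem.2 ⟨hnt₀, fun o ho => by_contra fun hne => ?_⟩
    obtain ⟨z, hz, hnz⟩ := (hC.1 t₀ ht₀).connected.exists_adj_of_induce hnt₀ ho (Ne.symm hne)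
    have hzs : z ∈ s := by rcases subdivide_adj_none.1 hnz with rfl | rfl <;> assumption
    exact Set.disjoint_left.1 (hC.2.2 hs ht₀ hst₀) hzs hz
  obtain ⟨A, hAs, huA, hwA, hA, hsA⟩ :=
    exists_isTree_induce_sdiff (hC.1 s hs) hus hws (by simpa using huw.ne)
  have hnA : none ∉ A := fun h => hns (hAs h)
  have hA' : ((subdivide G u w).induce (insert none A)).IsTree := by
    rwa [isTree_induce_iff_isTree_induce_sdiff_singleton (Set.mem_insert _ _)
      (Set.mem_insert_of_mem _ huA) fun y hy => ?_, Set.insert_sdiff_self_of_notMem hnA]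
    rw [subdivide_adj_none]
    refine ⟨fun h => h.resolve_right ?_, .inl⟩
    rintro rfl
    exact hy.elim (Option.some_ne_none w) hwA
  obtain ⟨C', hC', hcard, hmem⟩ := hC.exists_exchange hs ht₀ hst₀ hA' hsA
    (Set.disjoint_insert_left.2 ⟨fun h => hns h.1, Set.disjoint_sdiff_right⟩)
    (by rw [ht₀_eq, Set.insert_union, Set.union_sdiff_cancel hAs, Set.union_singleton])
  refine ⟨C', hC', hcard, fun r hr hur hwr => ?_⟩
  rcases hmem r hr with rfl | rfl | ⟨hrC, hrs, -⟩
  · exact Set.mem_insert _ _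
  · exact absurd huA hur.2
  · exact absurd (Set.disjoint_left.1 (hC.2.2 hrC hs hrs) hur) (not_not.2 hus)

lemma le_treeCoverNumber_subdivide [Finite V] (huw : G.Adj u w) :
    treeCoverNumber G ≤ treeCoverNumber (subdivide G u w) := by
  obtain ⟨C, hC, hcard⟩ := exists_isTreeCover_card_eq (subdivide G u w)
  obtain ⟨C', hC', hC'C, hgood⟩ := hC.exists_subdivide_none_mem_of_mem_of_mem huw
  refine (hC'.treeCoverNumber_le_of_preimage some fun t ht ⟨x, hx⟩ =>
    (isTree_induce_subdivide_iff huw (hgood t ht) fun hn => ?_).1 (hC'.1 t ht)).trans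
    (hcard ▸ hC'C)
  obtain ⟨z, hz, hnz⟩ :=
    (hC'.1 t ht).connected.exists_adj_of_induce hn hx (Option.some_ne_none x).symm
  rcases subdivide_adj_none.1 hnz with rfl | rfl
  exacts [.inl hz, .inr hz]

theorem treeCoverNumber_subdivide [Finite V] (huw : G.Adj u w) :
    treeCoverNumber (subdivide G u w) = treeCoverNumber G :=
  (treeCoverNumber_subdivide_le huw).antisymm (le_treeCoverNumber_subdivide huw)

end Subdivide

section Leaf

variable {V : Type} {G : SimpleGraph V} {v x : V}

lemma treeCoverNumber_induce_compl_singleton_le [Finite V] (hv : ∀ y, G.Adj v y ↔ y = x) :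
    treeCoverNumber (G.induce {v}ᶜ) ≤ treeCoverNumber G := by
  refine treeCoverNumber_le_of_isTree_preimage Subtype.val fun s hs ⟨⟨y, hyv⟩, hys⟩ => ?_
  rw [isTree_induce_induce_iff, Subtype.image_preimage_coe]
  by_cases hvs : v ∈ s
  · obtain ⟨z, hzs, hvz⟩ := hs.connected.exists_adj_of_induce hvs hys (Ne.symm hyv)
    rw [← Set.sdiff_eq_compl_inter]
    exact (isTree_induce_iff_isTree_induce_sdiff_singleton hvs hzs fun y _ =>
      (hv y).trans ⟨fun h => h.trans ((hv z).1 hvz).symm, fun h => h.trans ((hv z).1 hvz)⟩).1 hs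
  · rwa [Set.inter_eq_right.2 (Set.subset_compl_singleton_iff.2 hvs)]

lemma le_treeCoverNumber_induce_compl_singleton [Finite V] (hv : ∀ y, G.Adj v y ↔ y = x) :
    treeCoverNumber G ≤ treeCoverNumber (G.induce {v}ᶜ) := by
  classical
  have hxv : x ≠ v := ((hv x).2 rfl).ne'
  let g : V → ({v}ᶜ : Set V) := fun y => if h : y = v then ⟨x, hxv⟩ else ⟨y, h⟩
  refine treeCoverNumber_le_of_isTree_preimage g fun s hs _ => ?_
  have hdiff : g ⁻¹' s \ {v} = Subtype.val '' s := by
    ext y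
    by_cases hy : y = v <;> simp [g, hy]
  rw [isTree_induce_induce_iff, ← hdiff] at hs
  by_cases hvs : v ∈ g ⁻¹' s
  · have hxs : x ∈ g ⁻¹' s := by simpa [g, hxv] using hvs
    exact (isTree_induce_iff_isTree_induce_sdiff_singleton hvs hxs fun y _ => hv y).2 hs
  · rwa [Set.sdiff_singleton_eq_self hvs] at hs

theorem treeCoverNumber_induce_compl_singleton [Finite V] (hv : ∀ y, G.Adj v y ↔ y = x) :
    treeCoverNumber (G.induce {v}ᶜ) = treeCoverNumber G :=
  (treeCoverNumber_induce_compl_singleton_le hv).antisymm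
    (le_treeCoverNumber_induce_compl_singleton hv)

end Leaf

theorem stmt_19 :
    (∀ (V : Type) [Fintype V] (G : SimpleGraph V) (u w : V), G.Adj u w →
      treeCoverNumber (subdivide G u w) = treeCoverNumber G) ∧
    (∀ (V : Type) [Fintype V] [DecidableEq V] (G : SimpleGraph V) [inst : DecidableRel G.Adj]
      (v : V), G.degree v = 1 →
      treeCoverNumber (G.induce ({v}ᶜ : Set V)) = treeCoverNumber G) := by
  refine ⟨fun V _ G u w huw => treeCoverNumber_subdivide huw, fun V _ _ G _ v hv => ?_⟩
  obtain ⟨x, hvx, hx⟩ := degree_eq_one_iff_existsUnique_adj.1 hv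
  exact treeCoverNumber_induce_compl_singleton fun y => ⟨hx y, fun h => h ▸ hvx⟩
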